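/- Let R = R₀ ⊕ R₁ be a supercommutative ℝ-algebra equipped with an even derivation ∂ (write x' = ∂x). Suppose f₀, g₀ ∈ R₀ and f₁, g₁ ∈ R₁ satisfy: (1) f₀g₀ + g₁g₁' = −1, (2) f₁g₀ + g₁g₀' − g₀g₁' = 0, (3) −f₀f₁ + g₁f₀' = 0, (4) g₁f₁' + g₀f₀' = 0. Assume moreover that f₀ and g₀ are units in R. Then f₁ = 0, f₀' = 0, g₁' = 0, and g₀ = −f₀⁻¹. -/
import Mathlib


/-- Solving the equations expressing that `D = f∂_θ + g∂_t`, with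
`f = f₀ + f₁θ` and `g = g₁ + g₀θ`, squares to `−∂_t`: if `f₀, g₀` are units then
`f₁ = 0`, `f₀' = 0`, `g₁' = 0` and `g₀ = −f₀⁻¹`. -/
theorem stmt7 {A : Type*} [Ring A] [Algebra ℝ A] (S0 S1 : Submodule ℝ A)
    -- supercommutativity: even elements are central, odd elements anticommute
    -- and square to zero
    (hc0 : ∀ x ∈ S0, ∀ y : A, x * y = y * x)
    (hac : ∀ θ η : A, θ ∈ S1 → η ∈ S1 → θ * η = -(η * θ))
    (hsq : ∀ θ : A, θ ∈ S1 → θ * θ = 0)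
    (hmul11 : ∀ θ η : A, θ ∈ S1 → η ∈ S1 → θ * η ∈ S0)
    -- an even derivation ∂
    (D : A →ₗ[ℝ] A) (hD : ∀ x y : A, D (x * y) = D x * y + x * D y)
    (hD0 : ∀ x ∈ S0, D x ∈ S0) (hD1 : ∀ x ∈ S1, D x ∈ S1)
    (f₀ g₀ f₁ g₁ : A) (hf₀ : f₀ ∈ S0) (hg₀ : g₀ ∈ S0) (hf₁ : f₁ ∈ S1) (hg₁ : g₁ ∈ S1)
    (hu₀ : IsUnit f₀) (hu₀' : IsUnit g₀)
    (e1 : f₀ * g₀ + g₁ * D g₁ = -1)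
    (e2 : f₁ * g₀ + g₁ * D g₀ - g₀ * D g₁ = 0)
    (e3 : -(f₀ * f₁) + g₁ * D f₀ = 0)
    (e4 : g₁ * D f₁ + g₀ * D f₀ = 0) :
    f₁ = 0 ∧ D f₀ = 0 ∧ D g₁ = 0 ∧ f₀ * g₀ = -1 ∧ g₀ * f₀ = -1 := by
  have hD1' : D (1 : A) = 0 := by
    have h := hD 1 1
    simp only [one_mul, mul_one] at h
    exact (left_eq_add.mp h)
  -- Step 1: g₁ * D f₀ = 0
  have h1 : g₀ * (g₁ * D f₀) = 0 := by
    have h : g₁ * (g₁ * D f₁) + g₁ * (g₀ * D f₀) = 0 := by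
      rw [← mul_add, e4, mul_zero]
    rw [← mul_assoc, hsq g₁ hg₁, zero_mul, zero_add, ← mul_assoc,
      ← hc0 g₀ hg₀ g₁, mul_assoc] at h
    exact h
  have h2 : g₁ * D f₀ = 0 := (hu₀'.mul_right_eq_zero).mp h1
  have hf10 : f₁ = 0 := by
    rw [h2, add_zero] at e3
    exact (hu₀.mul_right_eq_zero).mp (neg_eq_zero.mp e3)
  have hDf1 : D f₁ = 0 := by rw [hf10, map_zero]
  have hDf0 : D f₀ = 0 := by
    rw [hDf1, mul_zero, zero_add] at e4
    exact (hu₀'.mul_right_eq_zero).mp e4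
  have e2' : g₀ * D g₁ = g₁ * D g₀ := by
    rw [hf10, zero_mul, zero_add] at e2
    exact (sub_eq_zero.mp e2).symm
  have h5 : g₁ * D g₁ = 0 := by
    have h : (g₁ * g₀) * D g₁ = (g₁ * g₁) * D g₀ := by
      rw [mul_assoc, mul_assoc, e2']
    rw [hsq g₁ hg₁, zero_mul, ← hc0 g₀ hg₀ g₁, mul_assoc] at h
    exact (hu₀'.mul_right_eq_zero).mp h
  have hfg : f₀ * g₀ = -1 := by rw [h5, add_zero] at e1; exact e1
  have hDg0 : D g₀ = 0 := by
    have h := hD f₀ g₀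
    rw [hfg, hDf0, zero_mul, zero_add, map_neg, hD1', neg_zero] at h
    exact (hu₀.mul_right_eq_zero).mp h.symm
  have hDg1 : D g₁ = 0 := by
    rw [hDg0, mul_zero] at e2'
    exact (hu₀'.mul_right_eq_zero).mp e2'
  exact ⟨hf10, hDf0, hDg1, hfg, by rw [← hc0 f₀ hf₀ g₀]; exact hfg⟩
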